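/- arXiv:1404.7654 — 2 statements merged into one kernel-verified Lean document; each statement's English description precedes it below -/
import Mathlib

section
/- Let γ₁, γ₂, γ₃ ∈ ℝ and Γ = diag(γ₁, γ₁, γ₁+γ₂+γ₃). For all φ ∈ ℝ, R ∈ SO(3), v ∈ ℝ, and w ∈ ℝ³, setting A = e^{iφ} R ∈ gl(3,ℂ), one has Re Tr(Γ (ivA + Aŵ)* (ivA + Aŵ)) = 2γ₁ ‖w‖² + (γ₂+γ₃)(w₁² + w₂²) + (3γ₁+γ₂+γ₃) v². -/
open Matrix

noncomputable section

abbrev M3R : Type := Matrix (Fin 3) (Fin 3) ℝ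
abbrev M3C : Type := Matrix (Fin 3) (Fin 3) ℂ

def isSO3 (R : M3R) : Prop := R * Rᵀ = 1 ∧ R.det = 1

def toC (R : M3R) : M3C := R.map (fun x => (x : ℂ))

/-- `v̂`, the real skew-symmetric matrix with `v̂ x = v × x`, as a complex matrix. -/
def hatC (v : Fin 3 → ℝ) : M3C :=
  toC !![0, -v 2, v 1; v 2, 0, -v 0; -v 1, v 0, 0]

/-- For `A = e^{iφ} R` with `R ∈ SO(3)` and `Γ = diag(γ₁, γ₁, γ₁+γ₂+γ₃)`,
`Re Tr(Γ (ivA + Aŵ)* (ivA + Aŵ)) = 2γ₁‖w‖² + (γ₂+γ₃)(w₁² + w₂²) + (3γ₁+γ₂+γ₃)v²`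
(the reduced Euler–Poincaré Lagrangian of the B-phase). -/
theorem B_phase_reduced_lagrangian (γ₁ γ₂ γ₃ : ℝ) (φ : ℝ) (R : M3R) (hR : isSO3 R)
    (v : ℝ) (w : Fin 3 → ℝ) :
    (Matrix.trace
        (toC (Matrix.diagonal ![γ₁, γ₁, γ₁ + γ₂ + γ₃]) *
          (((v : ℂ) * Complex.I) • (Complex.exp (φ * Complex.I) • toC R) +
              (Complex.exp (φ * Complex.I) • toC R) * hatC w)ᴴ *
          (((v : ℂ) * Complex.I) • (Complex.exp (φ * Complex.I) • toC R) +
              (Complex.exp (φ * Complex.I) • toC R) * hatC w))).re =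
      2 * γ₁ * (w ⬝ᵥ w) + (γ₂ + γ₃) * ((w 0) ^ 2 + (w 1) ^ 2) +
        (3 * γ₁ + γ₂ + γ₃) * v ^ 2 := by
  set c : ℂ := Complex.exp (φ * Complex.I) with hc
  set RC : M3C := toC R with hRCdef
  set H : M3C := hatC w with hH
  set G : M3C := toC (Matrix.diagonal ![γ₁, γ₁, γ₁ + γ₂ + γ₃]) with hG
  set vI : ℂ := (v : ℂ) * Complex.I with hvI
  -- star c * c = 1
  have hcc : star c * c = 1 := by
    show (starRingEnd ℂ) c * c = 1
    rw [hc, ← Complex.exp_conj, ← Complex.exp_add]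
    simp [Complex.conj_ofReal]
  -- orthogonality
  have hRC : RCᴴ * RC = 1 := by
    have hR' : Rᵀ * R = 1 := mul_eq_one_comm.mp hR.1
    ext i j
    have h := congrFun (congrFun hR' i) j
    simp [Matrix.mul_apply, toC, Matrix.conjTranspose_apply, Matrix.map_apply,
      Complex.conj_ofReal, Matrix.transpose_apply, Matrix.one_apply, hRCdef] at h ⊢
    calc (∑ x : Fin 3, (R x i : ℂ) * (R x j : ℂ))
        = ((∑ x : Fin 3, R x i * R x j : ℝ) : ℂ) := by push_cast; rfl
      _ = _ := by rw [h]; split <;> norm_num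
  have hHs : Hᴴ = -H := by
    ext i j
    fin_cases i <;> fin_cases j <;>
      simp [hH, hatC, toC, Matrix.conjTranspose_apply, Complex.conj_ofReal]
  -- factor out c
  have hB : vI • (c • RC) + (c • RC) * H = c • (vI • RC + RC * H) := by
    rw [smul_comm, Matrix.smul_mul, smul_add]
  rw [hB]
  -- kill the phase
  have hBB : (c • (vI • RC + RC * H))ᴴ * (c • (vI • RC + RC * H))
      = (vI • RC + RC * H)ᴴ * (vI • RC + RC * H) := by
    rw [conjTranspose_smul, Matrix.smul_mul, Matrix.mul_smul, smul_smul, hcc, one_smul]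
  rw [Matrix.mul_assoc, hBB]
  -- expand D† D
  have hconjvI : star vI = -vI := by
    show (starRingEnd ℂ) vI = -vI
    simp [hvI, Complex.conj_ofReal]
  have hDD : (vI • RC + RC * H)ᴴ * (vI • RC + RC * H)
      = ((v : ℂ) ^ 2) • (1 : M3C) + (-(2 * vI)) • H + -(H * H) := by
    rw [conjTranspose_add, conjTranspose_smul, conjTranspose_mul, hHs, hconjvI]
    rw [Matrix.add_mul, Matrix.mul_add, Matrix.mul_add]
    rw [Matrix.smul_mul, Matrix.smul_mul, Matrix.mul_smul, Matrix.mul_smul,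
      hRC, smul_smul]
    have h1 : RCᴴ * (RC * H) = H := by rw [← Matrix.mul_assoc, hRC, Matrix.one_mul]
    have h2 : (-H) * RCᴴ * RC = -H := by
      rw [Matrix.mul_assoc, hRC, Matrix.mul_one]
    have h3 : (-H) * RCᴴ * (RC * H) = -(H * H) := by
      rw [Matrix.mul_assoc, ← Matrix.mul_assoc RCᴴ, hRC, Matrix.one_mul, neg_mul]
    rw [h1, h2, h3]
    have hv2 : -vI * vI = (v : ℂ) ^ 2 := by
      rw [hvI]; ring_nf; simp [Complex.I_sq]
    rw [hv2]
    module
  rw [hDD]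
  simp only [Matrix.mul_add, Matrix.mul_smul, Matrix.mul_one, Matrix.mul_neg,
    Matrix.trace_add, Matrix.trace_smul, Matrix.trace_neg, smul_eq_mul]
  simp only [hG, hH, hatC, toC, Matrix.trace, Matrix.diag, Matrix.mul_apply,
    Matrix.map_apply, Matrix.diagonal, Fin.sum_univ_three, Matrix.of_apply,
    Matrix.cons_val', Matrix.cons_val_zero, Matrix.cons_val_one, Matrix.head_cons,
    Matrix.empty_val', Matrix.cons_val_fin_one, Matrix.head_fin_const,
    Matrix.cons_val_two, Matrix.tail_cons, dotProduct]
  push_cast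
  simp [Complex.add_re, Complex.mul_re, Complex.neg_re, Complex.I_re, Complex.I_im,
    Complex.ofReal_re, Complex.ofReal_im, Complex.mul_im, Complex.add_im,
    ← Complex.ofReal_pow]
  ring
end
end

section
/- Let A₀ = diag(1, 1, −2) ∈ gl(3,ℂ), and consider the action of U(1) × SO(3) on the space of complex symmetric traceless 3×3 matrices given by (e^{iφ}, R) · A = e^{iφ} R A R⁻¹. Then the stabilizer of A₀ equals the one-dimensional subgroup {(1, ρ(α)) : α ∈ ℝ} ∪ {(1, ρ(α) J₋) : α ∈ ℝ}, where J₋ = diag(1, −1, −1). -/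
open Matrix

noncomputable section

/-- `ρ(θ) = exp(θ ê₃)`, the rotation by angle `θ` about the third axis. -/
def rot3 (θ : ℝ) : M3R :=
  !![Real.cos θ, -Real.sin θ, 0; Real.sin θ, Real.cos θ, 0; 0, 0, 1]

/-- `J₋ = diag(1,-1,-1)`. -/
def Jm : M3R := !![1, 0, 0; 0, -1, 0; 0, 0, -1]

/-- `A₀ = diag(1, 1, -2)`. -/
def A0 : M3C := !![1, 0, 0; 0, 1, 0; 0, 0, -2]

/-!
Comparing determinants and traces of squares in `z • (R A₀ R⁻¹) = A₀` gives `z³ = 1` and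
`z² = 1`, so the phase is trivial and `R` commutes with `A₀`. Then `R` preserves the
eigenspaces `⟨e₁, e₂⟩` and `⟨e₃⟩` of `A₀`, so `R₃₃ = ±1` and the upper-left block is an
orthogonal `2 × 2` matrix of determinant `R₃₃`: a rotation `ρ(α)` when `R₃₃ = 1`, and
`ρ(α) J₋` when `R₃₃ = -1`, since then `R J₋` is of the first kind.
-/

namespace Matrix

variable {n K : Type*} [Fintype n] [DecidableEq n]

theorem commute_diagonal_iff [CommRing K] [NoZeroDivisors K] {d : n → K} {M : Matrix n n K} :
    Commute M (diagonal d) ↔ ∀ i j, d i ≠ d j → M i j = 0 := by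
  simp only [commute_iff_eq, ← Matrix.ext_iff, mul_diagonal, diagonal_mul]
  refine forall₂_congr fun i j => ?_
  rw [eq_comm, mul_comm, ← sub_eq_zero, ← mul_sub, mul_eq_zero, sub_eq_zero, or_comm,
    or_iff_not_imp_left]

theorem conj_eq_self_iff_commute [CommRing K] {M N : Matrix n n K} (hM : IsUnit M) :
    M * N * M⁻¹ = N ↔ Commute M N := by
  rw [← hM.unit_spec, ← coe_units_inv, Units.mul_inv_eq_iff_eq_mul, commute_iff_eq]

theorem eq_one_of_smul_conj_eq_self [Field K] (hK : ringChar K ≠ 2) (hn : Odd (Fintype.card n))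
    {M N : Matrix n n K} (hM : IsUnit M) (hdet : N.det ≠ 0) (htr : (N * N).trace ≠ 0) {z : K}
    (h : z • (M * N * M⁻¹) = N) : z = 1 := by
  have hcube : z ^ Fintype.card n = 1 := by
    have := congrArg det h
    rwa [det_smul, det_conj hM, mul_left_eq_self₀, or_iff_left hdet] at this
  have hsq : z ^ 2 = 1 := by
    have hconj : M * N * M⁻¹ * (M * N * M⁻¹) = M * (N * N) * M⁻¹ := by
      simp only [Matrix.mul_assoc,
        nonsing_inv_mul_cancel_left M _ ((isUnit_iff_isUnit_det M).mp hM)]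
    have := congrArg (fun X => trace (X * X)) h
    simp only [smul_mul_smul_comm, hconj, trace_smul, trace_conj hM, smul_eq_mul] at this
    rwa [mul_left_eq_self₀, or_iff_left htr, ← sq] at this
  rcases sq_eq_one_iff.mp hsq with h1 | rfl
  · exact h1
  · rw [hn.neg_one_pow, neg_one_eq_one_iff] at hcube
    exact absurd hcube hK

end Matrix

theorem Real.exists_cos_eq_sin_eq {a b : ℝ} (h : a ^ 2 + b ^ 2 = 1) :
    ∃ θ, Real.cos θ = a ∧ Real.sin θ = b := by
  have hnorm : ‖(⟨a, b⟩ : ℂ)‖ = 1 := by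
    rw [Complex.norm_def, Complex.normSq_mk, ← sq, ← sq, h, Real.sqrt_one]
  have hne : (⟨a, b⟩ : ℂ) ≠ 0 := norm_ne_zero_iff.mp (by rw [hnorm]; exact one_ne_zero)
  exact ⟨Complex.arg ⟨a, b⟩, by rw [Complex.cos_arg hne, hnorm, div_one],
    by rw [Complex.sin_arg, hnorm, div_one]⟩

theorem toC_mul (M N : M3R) : toC (M * N) = toC M * toC N :=
  Matrix.map_mul (f := Complex.ofRealHom)

theorem det_toC (M : M3R) : (toC M).det = M.det :=
  (Complex.ofRealHom.map_det M).symm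

theorem isSO3.mul {R S : M3R} (hR : isSO3 R) (hS : isSO3 S) : isSO3 (R * S) := by
  refine ⟨?_, by rw [det_mul, hR.2, hS.2, one_mul]⟩
  rw [transpose_mul, Matrix.mul_assoc, ← Matrix.mul_assoc S, hS.1, Matrix.one_mul, hR.1]

theorem isSO3.isUnit_toC {R : M3R} (hR : isSO3 R) : IsUnit (toC R) := by
  rw [isUnit_iff_isUnit_det, det_toC, hR.2]
  exact isUnit_one

theorem isSO3_rot3 (θ : ℝ) : isSO3 (rot3 θ) := by
  constructor
  · ext i j
    fin_cases i <;> fin_cases j <;> simp [rot3, mul_apply, Fin.sum_univ_three, ← sq] <;> ring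
  · simp [rot3, det_fin_three, ← sq]

theorem isSO3_Jm : isSO3 Jm := by
  constructor
  · ext i j
    fin_cases i <;> fin_cases j <;> simp [Jm, mul_apply, Fin.sum_univ_three]
  · simp [Jm, det_fin_three]

theorem Jm_mul_Jm : Jm * Jm = 1 := by
  ext i j
  fin_cases i <;> fin_cases j <;> simp [Jm, mul_apply, Fin.sum_univ_three]

theorem A0_eq_diagonal : A0 = diagonal ![1, 1, -2] := by
  ext i j
  fin_cases i <;> fin_cases j <;> simp [A0]

theorem commute_toC_A0_iff (R : M3R) :
    Commute (toC R) A0 ↔ R 0 2 = 0 ∧ R 1 2 = 0 ∧ R 2 0 = 0 ∧ R 2 1 = 0 := by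
  rw [A0_eq_diagonal, commute_diagonal_iff]
  norm_num [Fin.forall_fin_succ, toC]

theorem commute_toC_rot3_A0 (θ : ℝ) : Commute (toC (rot3 θ)) A0 := by
  simp [commute_toC_A0_iff, rot3]

theorem commute_toC_Jm_A0 : Commute (toC Jm) A0 := by
  simp [commute_toC_A0_iff, Jm]

theorem det_A0 : A0.det = -2 := by
  simp [A0, det_fin_three]

theorem trace_A0_mul_A0 : (A0 * A0).trace = 6 := by
  rw [A0_eq_diagonal, diagonal_mul_diagonal, trace_diagonal, Fin.sum_univ_three]
  simp only [cons_val_zero, cons_val_one, cons_val]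
  norm_num

theorem smul_conj_A0_eq_iff {R : M3R} (hR : isSO3 R) {z : ℂ} :
    z • (toC R * A0 * (toC R)⁻¹) = A0 ↔ z = 1 ∧ Commute (toC R) A0 := by
  refine ⟨fun h => ?_, fun ⟨hz, hc⟩ => ?_⟩
  · have hdet : A0.det ≠ 0 := by rw [det_A0]; norm_num
    have htr : (A0 * A0).trace ≠ 0 := by rw [trace_A0_mul_A0]; norm_num
    obtain rfl := eq_one_of_smul_conj_eq_self (by rw [ringChar.eq ℂ 0]; norm_num) (by decide)
      hR.isUnit_toC hdet htr h
    rw [one_smul, conj_eq_self_iff_commute hR.isUnit_toC] at h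
    exact ⟨rfl, h⟩
  · rw [hz, one_smul, conj_eq_self_iff_commute hR.isUnit_toC]
    exact hc

theorem isSO3.apply_two_two_eq_one_or_eq_neg_one {R : M3R} (hR : isSO3 R) (h20 : R 2 0 = 0)
    (h21 : R 2 1 = 0) : R 2 2 = 1 ∨ R 2 2 = -1 := by
  have h := congrFun (congrFun hR.1 2) 2
  simp only [mul_apply, transpose_apply, Fin.sum_univ_three, h20, h21, mul_zero, zero_add,
    one_apply_eq] at h
  exact mul_self_eq_one_iff.mp h

theorem exists_eq_rot3 {R : M3R} (hR : isSO3 R) (hc : Commute (toC R) A0) (h22 : R 2 2 = 1) :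
    ∃ θ, R = rot3 θ := by
  obtain ⟨h02, h12, h20, h21⟩ := (commute_toC_A0_iff R).mp hc
  have hRtR : Rᵀ * R = 1 := mul_eq_one_comm.mp hR.1
  have c00 := congrFun (congrFun hRtR 0) 0
  have c01 := congrFun (congrFun hRtR 0) 1
  have hdet := hR.2
  simp only [mul_apply, transpose_apply, Fin.sum_univ_three, h20, mul_zero, add_zero, one_apply_eq,
    ne_eq, zero_ne_one, not_false_eq_true, one_apply_ne] at c00 c01
  simp only [det_fin_three, h02, h12, h20, h21, h22, mul_one, mul_zero, zero_mul, sub_zero,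
    add_zero] at hdet
  obtain ⟨θ, hcos, hsin⟩ :=
    Real.exists_cos_eq_sin_eq (a := R 0 0) (b := R 1 0) (by linear_combination c00)
  have h01 : R 0 1 = -R 1 0 := by linear_combination R 0 0 * c01 - R 0 1 * c00 - R 1 0 * hdet
  have h11 : R 1 1 = R 0 0 := by linear_combination R 1 0 * c01 - R 1 1 * c00 + R 0 0 * hdet
  refine ⟨θ, ?_⟩
  ext i j
  fin_cases i <;> fin_cases j <;> simp [rot3, h01, h11, h02, h12, h20, h21, h22, hcos, hsin]

theorem commute_toC_mul_Jm_A0 {R : M3R} (hc : Commute (toC R) A0) :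
    Commute (toC (R * Jm)) A0 := by
  rw [toC_mul]
  exact hc.mul_left commute_toC_Jm_A0

theorem exists_eq_rot3_or_eq_rot3_mul_Jm {R : M3R} (hR : isSO3 R) (hc : Commute (toC R) A0) :
    ∃ θ, R = rot3 θ ∨ R = rot3 θ * Jm := by
  obtain ⟨-, -, h20, h21⟩ := (commute_toC_A0_iff R).mp hc
  rcases hR.apply_two_two_eq_one_or_eq_neg_one h20 h21 with h22 | h22
  · obtain ⟨θ, hθ⟩ := exists_eq_rot3 hR hc h22
    exact ⟨θ, Or.inl hθ⟩
  · obtain ⟨θ, hθ⟩ := exists_eq_rot3 (hR.mul isSO3_Jm) (commute_toC_mul_Jm_A0 hc)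
      (by simp [Jm, mul_apply, Fin.sum_univ_three, h20, h21, h22])
    refine ⟨θ, Or.inr ?_⟩
    rw [← hθ, Matrix.mul_assoc, Jm_mul_Jm, Matrix.mul_one]

/-- The stabilizer of `A₀ = diag(1,1,-2)` in `U(1) × SO(3)` under the action
`(e^{iφ}, R) · A = e^{iφ} R A R⁻¹` equals `{(1, ρ(α))} ∪ {(1, ρ(α) J₋)}`. -/
theorem stabilizer_Omega1_phase :
    {g : ℂ × M3R |
        (‖g.1‖ = 1 ∧ isSO3 g.2) ∧ g.1 • (toC g.2 * A0 * (toC g.2)⁻¹) = A0} =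
    {g : ℂ × M3R | ∃ α : ℝ, g = (1, rot3 α) ∨ g = (1, rot3 α * Jm)} := by
  ext ⟨z, R⟩
  constructor
  · rintro ⟨⟨-, hR⟩, hact⟩
    obtain ⟨rfl, hc⟩ := (smul_conj_A0_eq_iff hR).mp hact
    obtain ⟨θ, rfl | rfl⟩ := exists_eq_rot3_or_eq_rot3_mul_Jm hR hc
    exacts [⟨θ, Or.inl rfl⟩, ⟨θ, Or.inr rfl⟩]
  · rintro ⟨θ, h | h⟩ <;> obtain ⟨rfl, rfl⟩ := Prod.ext_iff.mp h
    · exact ⟨⟨norm_one, isSO3_rot3 θ⟩,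
        (smul_conj_A0_eq_iff (isSO3_rot3 θ)).mpr ⟨rfl, commute_toC_rot3_A0 θ⟩⟩
    · have hR := (isSO3_rot3 θ).mul isSO3_Jm
      exact ⟨⟨norm_one, hR⟩,
        (smul_conj_A0_eq_iff hR).mpr ⟨rfl, commute_toC_mul_Jm_A0 (commute_toC_rot3_A0 θ)⟩⟩
end
end
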